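/- arXiv:2003.02539 — 10 statements merged into one kernel-verified Lean document; each statement's English description precedes it below -/
import Mathlib

section
/- Let 0 < b̲ ≤ b̄ and 0 < a̲ ≤ ā with ā/b̄ ≥ a̲/b̲. Define q* = (1/(3(√b̲ + √b̄)))·(a̲/√b̲ + ā/√b̄). Then q* is the unique nonnegative solution q of the balancing equation (ā − b̄q)²/(4b̄) − (ā − 2b̄q)q = (a̲ − b̲q)²/(4b̲) − (a̲ − 2b̲q)q obtained by setting both firms' quantities equal (i.e., q solves q = (a̲√b̄ + ā√b̲)/(2(b̲√b̄ + b̄√b̲)) − q/2). -/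
open Real

/-- Cournot duopoly PCE: `q*` is the unique nonnegative solution of the balancing
equation (with both firms' quantities equal) together with the linear fixed-point
equation `q = K - q/2`. -/
theorem cournot_pce_unique
    (a1 a2 b1 b2 : ℝ)
    (hb1 : 0 < b1) (hb12 : b1 ≤ b2)
    (ha1 : 0 < a1) (ha12 : a1 ≤ a2)
    (hratio : a1 / b1 ≤ a2 / b2)
    (qstar : ℝ)
    (hq : qstar = (1 / (3 * (Real.sqrt b1 + Real.sqrt b2))) *
        (a1 / Real.sqrt b1 + a2 / Real.sqrt b2)) :
    (0 ≤ qstar ∧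
      (a2 - b2 * qstar) ^ 2 / (4 * b2) - (a2 - 2 * b2 * qstar) * qstar =
        (a1 - b1 * qstar) ^ 2 / (4 * b1) - (a1 - 2 * b1 * qstar) * qstar ∧
      qstar = (a1 * Real.sqrt b2 + a2 * Real.sqrt b1) /
          (2 * (b1 * Real.sqrt b2 + b2 * Real.sqrt b1)) - qstar / 2) ∧
    ∀ q : ℝ, 0 ≤ q →
      ((a2 - b2 * q) ^ 2 / (4 * b2) - (a2 - 2 * b2 * q) * q =
        (a1 - b1 * q) ^ 2 / (4 * b1) - (a1 - 2 * b1 * q) * q) →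
      (q = (a1 * Real.sqrt b2 + a2 * Real.sqrt b1) /
          (2 * (b1 * Real.sqrt b2 + b2 * Real.sqrt b1)) - q / 2) →
      q = qstar := by
  have hb2 : 0 < b2 := lt_of_lt_of_le hb1 hb12
  have hs1 : 0 < Real.sqrt b1 := Real.sqrt_pos.mpr hb1
  have hs2 : 0 < Real.sqrt b2 := Real.sqrt_pos.mpr hb2
  have hb1e : Real.sqrt b1 ^ 2 = b1 := Real.sq_sqrt hb1.le
  have hb2e : Real.sqrt b2 ^ 2 = b2 := Real.sq_sqrt hb2.le
  set s1 := Real.sqrt b1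
  set s2 := Real.sqrt b2
  have hs1' : s1 ≠ 0 := hs1.ne'
  have hs2' : s2 ≠ 0 := hs2.ne'
  have hsum : (0:ℝ) < s1 + s2 := by linarith
  have hden : (0:ℝ) < b1 * s2 + b2 * s1 := by positivity
  have hfix : qstar = (a1 * s2 + a2 * s1) / (2 * (b1 * s2 + b2 * s1)) - qstar / 2 := by
    rw [hq, ← hb1e, ← hb2e]
    field_simp
    ring
  refine ⟨⟨?_, ?_, hfix⟩, ?_⟩
  · rw [hq]
    exact le_of_lt (mul_pos (one_div_pos.mpr (by linarith))
      (add_pos (div_pos ha1 hs1) (div_pos (lt_of_lt_of_le ha1 ha12) hs2)))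
  · rw [hq, ← hb1e, ← hb2e]
    field_simp
    ring
  · intro q _ _ hqfix
    linarith [hfix, hqfix]
end

section
/- Let 0 < b̲ ≤ b̄ and 0 < a̲ ≤ ā with ā/b̄ ≥ a̲/b̲, and let q* = (1/(3(√b̲ + √b̄)))·(a̲/√b̲ + ā/√b̄). Then the common loss value L = (ā − b̄q*)²/(4b̄) − (ā − b̄(q*+q*))q*, i.e. the profit (ā − b̄(q*+q*))q* subtracted from the monopoly best-response profit (ā − b̄q*)²/(4b̄), equals (a̲b̄ − āb̲)² / (4 b̲ b̄ (√b̲ + √b̄)²). -/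
open Real

/-- Cournot duopoly PCE: the common maximum loss at the equilibrium quantity `q*`
equals `(a̲b̄ − āb̲)² / (4 b̲ b̄ (√b̲ + √b̄)²)`. -/
theorem cournot_pce_loss
    (a1 a2 b1 b2 : ℝ)
    (hb1 : 0 < b1) (hb12 : b1 ≤ b2)
    (ha1 : 0 < a1) (ha12 : a1 ≤ a2)
    (hratio : a1 / b1 ≤ a2 / b2)
    (qstar : ℝ)
    (hq : qstar = (1 / (3 * (Real.sqrt b1 + Real.sqrt b2))) *
        (a1 / Real.sqrt b1 + a2 / Real.sqrt b2)) :
    (a2 - b2 * qstar) ^ 2 / (4 * b2) - (a2 - b2 * (qstar + qstar)) * qstar =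
      (a1 * b2 - a2 * b1) ^ 2 /
        (4 * b1 * b2 * (Real.sqrt b1 + Real.sqrt b2) ^ 2) := by
  have hb2 : (0:ℝ) < b2 := lt_of_lt_of_le hb1 hb12
  have hs1 : (0:ℝ) < Real.sqrt b1 := Real.sqrt_pos.mpr hb1
  have hs2 : (0:ℝ) < Real.sqrt b2 := Real.sqrt_pos.mpr hb2
  have h1 : Real.sqrt b1 ^ 2 = b1 := Real.sq_sqrt hb1.le
  have h2 : Real.sqrt b2 ^ 2 = b2 := Real.sq_sqrt hb2.le
  set s1 := Real.sqrt b1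
  set s2 := Real.sqrt b2
  subst hq
  rw [← h1, ← h2]
  have hs12 : s1 + s2 ≠ 0 := by positivity
  field_simp
  ring
end

section
/- Let 0 ≤ c̲ ≤ c̄ ≤ a/2 and c ∈ [c̲, c̄]. Define p*(c) = (1/2)(a + c − √((a − c̄)² + (c̄ − c)²)). Then p*(c) is the unique solution p ∈ [c, (a+c)/2] of the equation 2(p − c)(a − p) = (c̄ − c)(a − c̄), and it satisfies c ≤ p*(c), with p*(c̄) = c̄ and p*(c) > c whenever c < c̄. -/
open Real

/-- Bertrand duopoly PCE: `p*(c)` is the unique solution in `[c, (a+c)/2]` of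
`2(p − c)(a − p) = (c̄ − c)(a − c̄)`, lies weakly above cost, with `p*(c̄) = c̄`
and `p*(c) > c` whenever `c < c̄`. -/
theorem bertrand_pce_price
    (a clow cbar c : ℝ)
    (h0 : 0 ≤ clow) (h1 : clow ≤ cbar) (h2 : cbar ≤ a / 2)
    (hc : c ∈ Set.Icc clow cbar)
    (pstar : ℝ → ℝ)
    (hp : ∀ x, pstar x =
      (1 / 2) * (a + x - Real.sqrt ((a - cbar) ^ 2 + (cbar - x) ^ 2))) :
    (pstar c ∈ Set.Icc c ((a + c) / 2) ∧
      2 * (pstar c - c) * (a - pstar c) = (cbar - c) * (a - cbar) ∧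
      ∀ p ∈ Set.Icc c ((a + c) / 2),
        2 * (p - c) * (a - p) = (cbar - c) * (a - cbar) → p = pstar c) ∧
    c ≤ pstar c ∧ pstar cbar = cbar ∧ (c < cbar → c < pstar c) := by
  obtain ⟨hcl, hcu⟩ := hc
  set s : ℝ := Real.sqrt ((a - cbar) ^ 2 + (cbar - c) ^ 2) with hsdef
  have hnn : (0:ℝ) ≤ (a - cbar) ^ 2 + (cbar - c) ^ 2 := by positivity
  have hs0 : 0 ≤ s := Real.sqrt_nonneg _
  have hs2 : s ^ 2 = (a - cbar) ^ 2 + (cbar - c) ^ 2 := Real.sq_sqrt hnn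
  have hacbar : 0 ≤ a - cbar := by linarith
  have hcc : 0 ≤ cbar - c := by linarith
  have hsle : s ≤ a - c := by nlinarith [sq_nonneg (a - c - s), sq_nonneg (a - c + s)]
  have hpc : pstar c = (1 / 2) * (a + c - s) := hp c
  have hmem : pstar c ∈ Set.Icc c ((a + c) / 2) := by
    constructor <;> rw [hpc] <;> linarith
  have heq : 2 * (pstar c - c) * (a - pstar c) = (cbar - c) * (a - cbar) := by
    rw [hpc]; nlinarith [hs2]
  refine ⟨⟨hmem, heq, ?_⟩, hmem.1, ?_, ?_⟩
  · rintro p ⟨hp1, hp2⟩ hpe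
    have hq := pstar c
    have key : (p - pstar c) * (a + c - p - pstar c) = 0 := by nlinarith [heq, hpe]
    rcases mul_eq_zero.mp key with h | h
    · linarith
    · have h1' : p = (a + c) / 2 := by
        have := hmem.2; linarith
      have h2' : pstar c = (a + c) / 2 := by
        have := hmem.2; linarith
      rw [h1', h2']
  · have : Real.sqrt ((a - cbar) ^ 2 + (cbar - cbar) ^ 2) = a - cbar := by
      rw [show (cbar - cbar : ℝ) = 0 by ring]
      simp [Real.sqrt_sq hacbar]
    rw [hp cbar, this]; ring
  · intro hlt
    have hcbpos : 0 < cbar := lt_of_le_of_lt (le_trans h0 hcl) hlt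
    have hac : 0 < a - cbar := by linarith
    have hslt : s < a - c := by
      nlinarith [sq_nonneg (a - c - s), hs2]
    rw [hpc]; linarith
end

section
/- Let 0 ≤ c̲ ≤ c̄ ≤ a/2, c ∈ [c̲, c̄], and p*(c) = (1/2)(a + c − √((a − c̄)² + (c̄ − c)²)). Then with b = 1 the associated maximum loss (p*(c) − c)(a − p*(c)) equals (a − c̄)(c̄ − c)/2, and this is at most (a − c̄)(c̄ − c̲)/2. -/
open Real

/-- Bertrand duopoly PCE (with `b = 1`): the maximum loss at the best-compromise
price equals `(a − c̄)(c̄ − c)/2`, which is at most `(a − c̄)(c̄ − c̲)/2`. -/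
theorem bertrand_pce_loss
    (a clow cbar c : ℝ)
    (h0 : 0 ≤ clow) (h1 : clow ≤ cbar) (h2 : cbar ≤ a / 2)
    (hc : c ∈ Set.Icc clow cbar)
    (pstar : ℝ)
    (hp : pstar = (1 / 2) * (a + c - Real.sqrt ((a - cbar) ^ 2 + (cbar - c) ^ 2))) :
    (pstar - c) * (a - pstar) = (a - cbar) * (cbar - c) / 2 ∧
    (a - cbar) * (cbar - c) / 2 ≤ (a - cbar) * (cbar - clow) / 2 := by
  obtain ⟨hc1, hc2⟩ := hc
  have hsq : Real.sqrt ((a - cbar) ^ 2 + (cbar - c) ^ 2) ^ 2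
      = (a - cbar) ^ 2 + (cbar - c) ^ 2 := Real.sq_sqrt (by positivity)
  constructor
  · subst hp; nlinarith [hsq]
  · nlinarith [hc1, h1, h2]
end

section
/- Fix a > 0, b > 0, c₀ with 0 < c₀ < a, and for 0 < ε < 1 set c̄ = (1 + ε/2)c₀ with a + c − 2c̄ > 0 for c ∈ [c̲, c̄]. Then the derivative of p^ε(c) = (1/2)(a + c − √((a − c̄)² + (c̄ − c)²)) with respect to ε equals (a + c − 2c̄)c₀ / (4√((a − c̄)² + (c̄ − c)²)), which is strictly positive. -/
open Real

/-- Comparative statics of the Bertrand PCE price in the uncertainty level `ε`: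
the derivative of `p^ε(c)` with respect to `ε` equals
`(a + c − 2c̄)c₀ / (4√((a − c̄)² + (c̄ − c)²))`, which is strictly positive. -/
theorem bertrand_pce_comparative_statics
    (a b c0 c eps cbar : ℝ)
    (ha : 0 < a) (hb : 0 < b) (hc0 : 0 < c0) (hc0a : c0 < a)
    (heps : 0 < eps) (heps1 : eps < 1)
    (hcbar : cbar = (1 + eps / 2) * c0)
    (hc : c ∈ Set.Icc ((1 - eps / 2) * c0) cbar)
    (hpos : 0 < a + c - 2 * cbar) :
    HasDerivAt
      (fun e : ℝ =>
        (1 / 2) * (a + c -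
          Real.sqrt ((a - (1 + e / 2) * c0) ^ 2 + ((1 + e / 2) * c0 - c) ^ 2)))
      ((a + c - 2 * cbar) * c0 /
        (4 * Real.sqrt ((a - cbar) ^ 2 + (cbar - c) ^ 2))) eps ∧
    0 < (a + c - 2 * cbar) * c0 /
        (4 * Real.sqrt ((a - cbar) ^ 2 + (cbar - c) ^ 2)) := by
  have hccbar : c ≤ cbar := hc.2
  have hacbar : 0 < a - cbar := by linarith
  have hgpos : 0 < (a - cbar) ^ 2 + (cbar - c) ^ 2 := by positivity
  have hsq : 0 < Real.sqrt ((a - cbar) ^ 2 + (cbar - c) ^ 2) := Real.sqrt_pos.mpr hgpos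
  -- derivative of inner function g
  have hu : HasDerivAt (fun e : ℝ => (1 + e / 2) * c0) (c0 / 2) eps := by
    have : HasDerivAt (fun e : ℝ => (1 + e / 2) * c0) ((1 / 2) * c0) eps := by
      have h1 : HasDerivAt (fun e : ℝ => 1 + e / 2) (1 / 2) eps := by
        simpa using ((hasDerivAt_id eps).div_const 2).const_add 1
      simpa using h1.mul_const c0
    simpa [div_eq_mul_inv, mul_comm] using this
  have hg : HasDerivAt
      (fun e : ℝ => (a - (1 + e / 2) * c0) ^ 2 + ((1 + e / 2) * c0 - c) ^ 2)
      (2 * (a - cbar) * (-(c0 / 2)) + 2 * (cbar - c) * (c0 / 2)) eps := by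
    have h1 : HasDerivAt (fun e : ℝ => a - (1 + e / 2) * c0) (-(c0 / 2)) eps :=
      (hu.const_sub a)
    have h2 : HasDerivAt (fun e : ℝ => (1 + e / 2) * c0 - c) (c0 / 2) eps :=
      (hu.sub_const c)
    have h1' := h1.pow 2
    have h2' := h2.pow 2
    have := h1'.add h2'
    refine this.congr_deriv ?_
    rw [hcbar]
    ring
  have hne : (a - (1 + eps / 2) * c0) ^ 2 + ((1 + eps / 2) * c0 - c) ^ 2 ≠ 0 := by
    rw [← hcbar]; exact ne_of_gt hgpos
  have hraw := (Real.hasDerivAt_sqrt hne).comp eps hg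
  have hsqrt : HasDerivAt
      (fun e : ℝ => Real.sqrt ((a - (1 + e / 2) * c0) ^ 2 + ((1 + e / 2) * c0 - c) ^ 2))
      (1 / (2 * Real.sqrt ((a - (1 + eps / 2) * c0) ^ 2 + ((1 + eps / 2) * c0 - c) ^ 2)) *
        (2 * (a - cbar) * (-(c0 / 2)) + 2 * (cbar - c) * (c0 / 2))) eps := by
    exact hraw
  have hmain := ((hsqrt.const_sub (a + c)).const_mul (1 / 2 : ℝ))
  have hsE : Real.sqrt ((a - (1 + eps / 2) * c0) ^ 2 + ((1 + eps / 2) * c0 - c) ^ 2)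
      = Real.sqrt ((a - cbar) ^ 2 + (cbar - c) ^ 2) := by rw [← hcbar]
  constructor
  · refine hmain.congr_deriv ?_
    rw [hsE]
    field_simp
    ring
  · have hnum : 0 < (a + c - 2 * cbar) * c0 := by positivity
    positivity
end

section
/- Let 0 ≤ δ < b ≤ 1. The system θ̲_H = (1 − w_H + w_L)/b, θ̄_H = 1, θ̄_L = (1 + δ − w_H + w_L)/b, θ̲_L = 0, w_H = (θ̄_H + θ̲_H)/2, w_L = (θ̄_L + θ̲_L)/2 has the unique solution w_H = 1/2 + (b + δ)/(4b²) and w_L = δ/(2b) + (b + δ)/(4b²), with θ̲_H = (b + δ)/(2b²) and θ̄_L = (b + δ)/(2b²) + δ/b. -/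
/-- Separating PCE wages in Spence's signaling model: the system of equations for
the wages and productivity cutoffs has the stated unique solution. -/
theorem spence_separating_system
    (b delta wH wL thHlo thHhi thLlo thLhi : ℝ)
    (hd : 0 ≤ delta) (hdb : delta < b) (hb : b ≤ 1)
    (e1 : thHlo = (1 - wH + wL) / b)
    (e2 : thHhi = 1)
    (e3 : thLhi = (1 + delta - wH + wL) / b)
    (e4 : thLlo = 0)
    (e5 : wH = (thHhi + thHlo) / 2)
    (e6 : wL = (thLhi + thLlo) / 2) :
    wH = 1 / 2 + (b + delta) / (4 * b ^ 2) ∧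
    wL = delta / (2 * b) + (b + delta) / (4 * b ^ 2) ∧
    thHlo = (b + delta) / (2 * b ^ 2) ∧
    thLhi = (b + delta) / (2 * b ^ 2) + delta / b := by
  have hb0 : b ≠ 0 := by nlinarith
  subst e2 e4 e1 e3
  field_simp at e5 e6 ⊢
  refine ⟨by nlinarith [sq_nonneg b], by nlinarith [sq_nonneg b], by nlinarith [sq_nonneg b], by nlinarith [sq_nonneg b]⟩
end

section
/- Let 0 ≤ v₀ ≤ v₁ and p ∈ [0,1]. Define the seller's best compromise acceptance probability α*(p) = 0 if p ≤ v₀, α*(p) = (p − v₀)/(v₁ − v₀) if v₀ < p < v₁, and α*(p) = 1 if p ≥ v₁. Then for every α ∈ [0,1], sup_{v ∈ [v₀,v₁]}(max{p − v, 0} − α(p − v)) ≥ sup_{v ∈ [v₀,v₁]}(max{p − v, 0} − α*(p)(p − v)), i.e., α*(p) minimizes the maximum loss over all acceptance probabilities. -/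
open Real

/-- The seller's best-compromise acceptance probability `α*(p)` minimizes the
maximum loss over all acceptance probabilities `α ∈ [0,1]`. -/
theorem seller_best_compromise
    (v0 v1 p : ℝ) (h0 : 0 ≤ v0) (h1 : v0 ≤ v1) (hp : p ∈ Set.Icc (0 : ℝ) 1)
    (astar : ℝ)
    (ha : astar = if p ≤ v0 then 0
      else if p < v1 then (p - v0) / (v1 - v0) else 1) :
    ∀ α ∈ Set.Icc (0 : ℝ) 1,
      sSup ((fun v => max (p - v) 0 - astar * (p - v)) '' Set.Icc v0 v1) ≤
        sSup ((fun v => max (p - v) 0 - α * (p - v)) '' Set.Icc v0 v1) := by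
  intro α hα
  obtain ⟨hα0, hα1⟩ := hα
  set f : ℝ → ℝ → ℝ := fun a v => max (p - v) 0 - a * (p - v) with hf
  -- bounds on astar
  have hstar : 0 ≤ astar ∧ astar ≤ 1 := by
    rw [ha]
    split_ifs with h1' h2'
    · norm_num
    · push_neg at h1'
      constructor
      · exact div_nonneg (by linarith) (by linarith)
      · rw [div_le_one (by linarith)]; linarith
    · norm_num
  obtain ⟨hs0, hs1⟩ := hstar
  have hnonneg : ∀ a v, 0 ≤ a → a ≤ 1 → 0 ≤ f a v := by
    intro a v h0a h1a
    simp only [hf]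
    rcases le_or_gt (p - v) 0 with h | h
    · rw [max_eq_right h]; nlinarith
    · rw [max_eq_left h.le]; nlinarith
  have hbound : ∀ a, 0 ≤ a → a ≤ 1 → ∀ v ∈ Set.Icc v0 v1,
      f a v ≤ max (f a v0) (f a v1) := by
    intro a h0a h1a v hv
    obtain ⟨hv0, hv1⟩ := hv
    rcases le_or_gt v p with h | h
    · have hp0 : v0 ≤ p := le_trans hv0 h
      have e1 : f a v = (1 - a) * (p - v) := by
        simp only [hf]; rw [max_eq_left (by linarith)]; ring
      have e2 : f a v0 = (1 - a) * (p - v0) := by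
        simp only [hf]; rw [max_eq_left (by linarith)]; ring
      refine le_trans ?_ (le_max_left _ _)
      rw [e1, e2]; nlinarith
    · have hp1 : p ≤ v1 := le_trans h.le hv1
      have e1 : f a v = a * (v - p) := by
        simp only [hf]; rw [max_eq_right (by linarith)]; ring
      have e2 : f a v1 = a * (v1 - p) := by
        simp only [hf]; rw [max_eq_right (by linarith)]; ring
      refine le_trans ?_ (le_max_right _ _)
      rw [e1, e2]; nlinarith
  have hmem0 : v0 ∈ Set.Icc v0 v1 := ⟨le_refl _, h1⟩
  have hmem1 : v1 ∈ Set.Icc v0 v1 := ⟨h1, le_refl _⟩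
  have hbdd : BddAbove (f α '' Set.Icc v0 v1) := by
    refine ⟨max (f α v0) (f α v1), ?_⟩
    rintro x ⟨v, hv, rfl⟩
    exact hbound α hα0 hα1 v hv
  have hge : max (f α v0) (f α v1) ≤ sSup (f α '' Set.Icc v0 v1) :=
    max_le (le_csSup hbdd ⟨v0, hmem0, rfl⟩) (le_csSup hbdd ⟨v1, hmem1, rfl⟩)
  have hle : sSup (f astar '' Set.Icc v0 v1) ≤ max (f astar v0) (f astar v1) := by
    apply Real.sSup_le
    · rintro x ⟨v, hv, rfl⟩
      exact hbound astar hs0 hs1 v hv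
    · exact le_trans (hnonneg astar v0 hs0 hs1) (le_max_left _ _)
  have hkey : max (f astar v0) (f astar v1) ≤ max (f α v0) (f α v1) := by
    rw [ha]
    split_ifs with h1' h2'
    · -- p ≤ v0 : astar = 0
      have e0 : f 0 v0 = 0 := by
        simp only [hf]; rw [max_eq_right (by linarith)]; ring
      have e1 : f 0 v1 = 0 := by
        simp only [hf]; rw [max_eq_right (by linarith)]; ring
      rw [e0, e1]
      simp only [max_self]
      exact le_trans (hnonneg α v0 hα0 hα1) (le_max_left _ _)
    · -- v0 < p < v1
      push_neg at h1'
      have hd : (0:ℝ) < v1 - v0 := by linarith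
      set t := (p - v0) / (v1 - v0) with ht
      have htm : t * (v1 - v0) = p - v0 := by
        rw [ht]; field_simp
      have e0 : f t v0 = (1 - t) * (p - v0) := by
        simp only [hf]; rw [max_eq_left (by linarith)]; ring
      have e1 : f t v1 = t * (v1 - p) := by
        simp only [hf]; rw [max_eq_right (by linarith)]; ring
      have heq : (1 - t) * (p - v0) = t * (v1 - p) := by nlinarith [htm]
      rw [e0, e1]
      rcases le_or_gt α t with hc | hc
      · refine max_le (le_trans ?_ (le_max_left _ _)) (le_trans ?_ (le_max_left _ _))
        · have e2 : f α v0 = (1 - α) * (p - v0) := by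
            simp only [hf]; rw [max_eq_left (by linarith)]; ring
          rw [e2]; nlinarith
        · have e2 : f α v0 = (1 - α) * (p - v0) := by
            simp only [hf]; rw [max_eq_left (by linarith)]; ring
          rw [← heq, e2]; nlinarith
      · refine max_le (le_trans ?_ (le_max_right _ _)) (le_trans ?_ (le_max_right _ _))
        · have e2 : f α v1 = α * (v1 - p) := by
            simp only [hf]; rw [max_eq_right (by linarith)]; ring
          rw [heq, e2]; nlinarith
        · have e2 : f α v1 = α * (v1 - p) := by
            simp only [hf]; rw [max_eq_right (by linarith)]; ring
          rw [e2]; nlinarith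
    · -- p ≥ v1 : astar = 1
      push_neg at h1' h2'
      have e0 : f 1 v0 = 0 := by
        simp only [hf]; rw [max_eq_left (by linarith)]; ring
      have e1 : f 1 v1 = 0 := by
        simp only [hf]; rw [max_eq_left (by linarith)]; ring
      rw [e0, e1]
      simp only [max_self]
      exact le_trans (hnonneg α v0 hα0 hα1) (le_max_left _ _)
  calc sSup (f astar '' Set.Icc v0 v1) ≤ max (f astar v0) (f astar v1) := hle
    _ ≤ max (f α v0) (f α v1) := hkey
    _ ≤ sSup (f α '' Set.Icc v0 v1) := hge
end

section
/- Define α*(x, p) = 0 if x ≥ 2p, α*(x, p) = 2p − x if 2p − 1 < x < 2p, and α*(x, p) = 1 if x ≤ 2p − 1, for x, p ∈ [0,1]. Then for every fixed x ∈ [0,1], the supremum over p' ∈ [0,1] of ((x + y)/2 − p')·α*(x, p'), maximized pointwise in p' with y fixed, satisfies: sup_{p' ∈ [0,1]} ((x + y)/2 − p')·α*(x, p') = y²/8 for all y ∈ [0,1]. -/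
open Real

/-- Seller's acceptance probability in the buyer-proposer bilateral trade game. -/
noncomputable def tradeAccept (x p : ℝ) : ℝ :=
  if x ≤ 2 * p - 1 then 1 else if x < 2 * p then 2 * p - x else 0

/-- The buyer's maximum attainable payoff against the seller's acceptance
strategy `α*(x, ·)` is `y²/8`. -/
theorem buyer_max_payoff
    (x y : ℝ) (hx : x ∈ Set.Icc (0 : ℝ) 1) (hy : y ∈ Set.Icc (0 : ℝ) 1) :
    sSup ((fun p' => ((x + y) / 2 - p') * tradeAccept x p') '' Set.Icc (0 : ℝ) 1) =
      y ^ 2 / 8 := by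
  obtain ⟨hx0, hx1⟩ := hx
  obtain ⟨hy0, hy1⟩ := hy
  have hub : ∀ p ∈ Set.Icc (0:ℝ) 1,
      ((x + y) / 2 - p) * tradeAccept x p ≤ y ^ 2 / 8 := by
    intro p hp
    obtain ⟨hp0, hp1⟩ := hp
    unfold tradeAccept
    split_ifs with h1 h2
    · nlinarith
    · nlinarith [sq_nonneg (2 * p - x - y / 2)]
    · nlinarith
  have hmem : y ^ 2 / 8 ∈
      ((fun p' => ((x + y) / 2 - p') * tradeAccept x p') '' Set.Icc (0:ℝ) 1) := by
    refine ⟨x / 2 + y / 4, ⟨by linarith, by linarith⟩, ?_⟩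
    simp only [tradeAccept]
    split_ifs with h1 h2
    · exfalso; linarith
    · ring
    · push_neg at h2
      nlinarith
  apply le_antisymm
  · exact csSup_le ⟨_, hmem⟩ (by rintro v ⟨p, hp, rfl⟩; exact hub p hp)
  · exact le_csSup ⟨y ^ 2 / 8, by rintro v ⟨p, hp, rfl⟩; exact hub p hp⟩ hmem
end

section
/- Define α*(x, p) as: 0 if x ≥ 2p; 2p − x if 2p − 1 < x < 2p; 1 if x ≤ 2p − 1. Define the buyer's loss L(p) = sup over (x, y) ∈ [0,1]² of (y²/8 − ((x + y)/2 − p)·α*(x, p)). Then L(1/4) = 1/8, and L(p) ≥ 1/8 for every p ∈ [0,1]; that is, p* = 1/4 minimizes the buyer's maximum loss. -/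
open Real

/-- The buyer's maximum loss from offering price `p`. -/
noncomputable def buyerLoss (p : ℝ) : ℝ :=
  sSup ((fun xy : ℝ × ℝ =>
      xy.2 ^ 2 / 8 - ((xy.1 + xy.2) / 2 - p) * tradeAccept xy.1 p) ''
    (Set.Icc (0 : ℝ) 1 ×ˢ Set.Icc (0 : ℝ) 1))

lemma tradeAccept_nonneg (x p : ℝ) : 0 ≤ tradeAccept x p := by
  unfold tradeAccept
  split_ifs with h1 h2 <;> linarith

lemma tradeAccept_le_one {x p : ℝ} : tradeAccept x p ≤ 1 := by
  unfold tradeAccept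
  split_ifs with h1 h2 <;> linarith

lemma loss_bdd (p : ℝ) (hp : p ∈ Set.Icc (0 : ℝ) 1) :
    BddAbove ((fun xy : ℝ × ℝ =>
      xy.2 ^ 2 / 8 - ((xy.1 + xy.2) / 2 - p) * tradeAccept xy.1 p) ''
    (Set.Icc (0 : ℝ) 1 ×ˢ Set.Icc (0 : ℝ) 1)) := by
  obtain ⟨hp0, hp1⟩ := hp
  refine ⟨9/8, ?_⟩
  rintro z ⟨⟨x, y⟩, ⟨⟨hx0, hx1⟩, ⟨hy0, hy1⟩⟩, rfl⟩
  simp only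
  have hα0 := tradeAccept_nonneg x p
  have hα1 : tradeAccept x p ≤ 1 := tradeAccept_le_one
  have ht : -1 ≤ (x + y) / 2 - p := by linarith
  have key : 0 ≤ ((x + y) / 2 - p + 1) * tradeAccept x p :=
    mul_nonneg (by linarith) hα0
  nlinarith [sq_nonneg y]

/-- The price `p* = 1/4` minimizes the buyer's maximum loss, which equals `1/8`. -/
theorem buyer_best_price :
    buyerLoss (1 / 4) = 1 / 8 ∧
    ∀ p ∈ Set.Icc (0 : ℝ) 1, 1 / 8 ≤ buyerLoss p := by
  have hmem11 : ((1 : ℝ), (1 : ℝ)) ∈ Set.Icc (0 : ℝ) 1 ×ˢ Set.Icc (0 : ℝ) 1 := by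
    constructor <;> constructor <;> norm_num
  have hmem00 : ((0 : ℝ), (0 : ℝ)) ∈ Set.Icc (0 : ℝ) 1 ×ˢ Set.Icc (0 : ℝ) 1 := by
    constructor <;> constructor <;> norm_num
  constructor
  · -- buyerLoss (1/4) = 1/8
    apply le_antisymm
    · apply csSup_le
      · exact ⟨_, Set.mem_image_of_mem _ hmem11⟩
      · rintro z ⟨⟨x, y⟩, ⟨⟨hx0, hx1⟩, ⟨hy0, hy1⟩⟩, rfl⟩
        simp only [tradeAccept]
        split_ifs with h1 h2
        · linarith
        · push_neg at h1
          -- x < 1/2, α = 1/2 - x; reduces to (y - (1-2x))² ≤ 1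
          have h3 : 0 ≤ 1 - y + (1 - 2*x) := by linarith [show x < 1/2 by linarith]
          have h4 : 0 ≤ 1 + y - (1 - 2*x) := by linarith
          nlinarith [mul_nonneg h3 h4]
        · nlinarith
    · apply le_csSup (loss_bdd (1/4) (by norm_num))
      refine ⟨((1 : ℝ), (1 : ℝ)), hmem11, ?_⟩
      simp only [tradeAccept]
      norm_num
  · intro p hp
    rcases le_or_gt p (1/2) with h | h
    · -- use (1,1): α = 0, value 1/8
      have := le_csSup (loss_bdd p hp) (Set.mem_image_of_mem _ hmem11)
      refine le_trans ?_ this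
      simp only [tradeAccept]
      rw [if_neg (by linarith [hp.1] : ¬ (1 : ℝ) ≤ 2 * p - 1),
          if_neg (by linarith : ¬ (1 : ℝ) < 2 * p)]
      norm_num
    · -- use (0,0): α = 1, value p ≥ 1/2
      have := le_csSup (loss_bdd p hp) (Set.mem_image_of_mem _ hmem00)
      refine le_trans ?_ this
      simp only [tradeAccept]
      rw [if_pos (by linarith : (0 : ℝ) ≤ 2 * p - 1)]
      norm_num
      linarith
end

section
/- Fix v ∈ [0, v̄] and c > 0. Under the proportional transfer rule, the function L(x) = max{max{v − x, 0}, c·x/(c + x)} on [0, v̄] is minimized at x* = v/2 − c + (1/2)√(v² + 4c²), and at this point v − x* = c·x*/(c + x*). -/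
open Real

/-- Public good provision with the proportional transfer rule: the maximum loss
`L(x) = max{max{v − x, 0}, cx/(c + x)}` on `[0, v̄]` is minimized at
`x* = v/2 − c + (1/2)√(v² + 4c²)`, where the two losses balance. -/
theorem public_good_proportional
    (v vbar c : ℝ) (hv : v ∈ Set.Icc (0 : ℝ) vbar) (hc : 0 < c)
    (xstar : ℝ)
    (hx : xstar = v / 2 - c + (1 / 2) * Real.sqrt (v ^ 2 + 4 * c ^ 2)) :
    xstar ∈ Set.Icc (0 : ℝ) vbar ∧
    (∀ x ∈ Set.Icc (0 : ℝ) vbar,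
      max (max (v - xstar) 0) (c * xstar / (c + xstar)) ≤
        max (max (v - x) 0) (c * x / (c + x))) ∧
    v - xstar = c * xstar / (c + xstar) := by
  obtain ⟨hv0, hvbar⟩ := hv
  set s := Real.sqrt (v ^ 2 + 4 * c ^ 2) with hs
  have hs0 : 0 ≤ s := Real.sqrt_nonneg _
  have hs2 : s ^ 2 = v ^ 2 + 4 * c ^ 2 := by
    rw [hs, sq_sqrt]; positivity
  have hx0 : 0 ≤ xstar := by nlinarith [sq_nonneg (s - (2 * c - v))]
  have hxv : xstar ≤ v := by nlinarith [sq_nonneg (s - (v + 2 * c))]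
  have hden : 0 < c + xstar := by linarith
  have hquad : (v - xstar) * (c + xstar) = c * xstar := by nlinarith
  have hbal : v - xstar = c * xstar / (c + xstar) := by
    field_simp; linarith [hquad]
  have hM : max (max (v - xstar) 0) (c * xstar / (c + xstar)) = v - xstar := by
    simp [← hbal, max_eq_left (show (0:ℝ) ≤ v - xstar by linarith)]
  refine ⟨⟨hx0, le_trans hxv hvbar⟩, ?_, hbal⟩
  intro x ⟨hx0', _⟩
  have hdx : 0 < c + x := by linarith
  rw [hM]
  rcases le_total x xstar with h | h
  · exact le_trans (by linarith) (le_max_of_le_left (le_max_left _ _))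
  · refine le_trans ?_ (le_max_right _ _)
    rw [hbal, div_le_div_iff₀ hden hdx]
    nlinarith
end
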